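/- Fix an integer m ≥ 1 and let g be the unique R-valued function on words over {0,1,…,m} satisfying (K0)–(K3). Then for every word v that is not of the form (m,m,…,m), g(v) lies in the image of the polynomial ring ℤ[q,t,a] under the localization map ℤ[q,t,a] → R; that is, g(v) is a polynomial in q, t, a with no denominator. -/

import Mathlib

noncomputable section

/-- The polynomial ring `ℤ[q,t,a]`. -/
abbrev P : Type := MvPolynomial (Fin 3) ℤ

/-- The variable `q`. -/
def q : P := MvPolynomial.X 0
/-- The variable `t`. -/
def t : P := MvPolynomial.X 1
/-- The variable `a`. -/
def a : P := MvPolynomial.X 2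

/-- `R`, the localization of `ℤ[q,t,a]` at the element `1 - q`. -/
abbrev R : Type := Localization.Away (1 - q)

/-- The localization map `ℤ[q,t,a] → R`. -/
def φ : P →+* R := algebraMap P R

/-- `#{i : v_i < c}`, the number of entries of `v` strictly less than `c`. -/
def cntlt {m : ℕ} (c : ℕ) (v : List (Fin (m + 1))) : ℕ :=
  v.countP fun y => decide ((y : ℕ) < c)

/-- The relations (K0)–(K3) for a function `g` from words over `{0,1,…,m}` to `R`. -/
def Krel (m : ℕ) (g : List (Fin (m + 1)) → R) : Prop :=
  -- (K0)
  g [] = 1 ∧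
  g [(0 : Fin (m + 1))] = 1 + φ a ∧
  -- (K1a)
  (∀ v : List (Fin (m + 1)),
    g ((0 : Fin (m + 1)) :: Fin.last m :: v) =
      φ t ^ cntlt m v * g (v ++ [(⟨m - 1, by omega⟩ : Fin (m + 1))])) ∧
  -- (K1b)
  (∀ (x : Fin (m + 1)) (w : List (Fin (m + 1))), (x : ℕ) < m →
    g ((0 : Fin (m + 1)) :: x :: w) =
      (φ t ^ cntlt m (x :: w) + φ a) * g (x :: w)) ∧
  -- (K2)
  (∀ (v : List (Fin (m + 1))) (k : ℕ) (_hk1 : 1 ≤ k) (_hk2 : k ≤ m - 1),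
    g ((⟨k, by omega⟩ : Fin (m + 1)) :: v) =
      φ t ^ cntlt k v * g (v ++ [(⟨k - 1, by omega⟩ : Fin (m + 1))])) ∧
  -- (K3)
  (∀ v : List (Fin (m + 1)),
    g (Fin.last m :: v) =
      g (v ++ [(⟨m - 1, by omega⟩ : Fin (m + 1))]) + φ q * g (v ++ [Fin.last m]))

/-! Each of the relations (K0)–(K3) writes `g w`, for a word `w` with a letter other than `m`,
as a combination with coefficients in `ℤ[q,t,a]` of values of `g` at words that again have
such a letter and are smaller in the lexicographic order on (sum of the letters, length, number
of leading `m`'s). Well-founded induction along this order gives the claim. Only the words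
`m⋯m` escape: for them (K3) reads `g(mⁿ) = g(mⁿ⁻¹(m-1)) + q·g(mⁿ)`, and solving it divides
by `1 - q`. -/

theorem List.takeWhile_append_of_exists_not {α : Type*} {p : α → Bool} {xs : List α}
    (ys : List α) (h : ∃ x ∈ xs, ¬ p x) : (xs ++ ys).takeWhile p = xs.takeWhile p := by
  induction xs with
  | nil => simp at h
  | cons x xs ih =>
    by_cases hx : p x
    · obtain ⟨y, hy, hpy⟩ := h
      have hy' : y ∈ xs := (List.mem_cons.mp hy).resolve_left (by rintro rfl; exact hpy hx)
      simp [hx, ih ⟨y, hy', hpy⟩]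
    · simp [hx]

namespace Krel

variable {m : ℕ}

def weight (w : List (Fin (m + 1))) : ℕ := (w.map Fin.val).sum

def leadingLast (w : List (Fin (m + 1))) : ℕ := (w.takeWhile (· = Fin.last m)).length

@[simp] lemma weight_cons (x : Fin (m + 1)) (w : List (Fin (m + 1))) :
    weight (x :: w) = x + weight w := by simp [weight]

@[simp] lemma weight_append_singleton (w : List (Fin (m + 1))) (x : Fin (m + 1)) :
    weight (w ++ [x]) = weight w + x := by simp [weight]

lemma leadingLast_cons_last (w : List (Fin (m + 1))) :
    leadingLast (Fin.last m :: w) = leadingLast w + 1 := by simp [leadingLast]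

lemma leadingLast_append {v : List (Fin (m + 1))} (u : List (Fin (m + 1)))
    (hv : ∃ x ∈ v, x ≠ Fin.last m) : leadingLast (v ++ u) = leadingLast v := by
  simp only [leadingLast]
  rw [List.takeWhile_append_of_exists_not u (by simpa using hv)]

def rank (w : List (Fin (m + 1))) : ℕ ×ₗ ℕ ×ₗ ℕ :=
  toLex (weight w, toLex (w.length, leadingLast w))

lemma rank_lt_of_weight_lt {w w' : List (Fin (m + 1))} (h : weight w' < weight w) :
    rank w' < rank w :=
  Prod.Lex.toLex_lt_toLex.2 (Or.inl h)

lemma rank_lt_of_length_lt {w w' : List (Fin (m + 1))} (h₁ : weight w' = weight w)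
    (h₂ : w'.length < w.length) : rank w' < rank w :=
  Prod.Lex.toLex_lt_toLex.2 (Or.inr ⟨h₁, Prod.Lex.toLex_lt_toLex.2 (Or.inl h₂)⟩)

lemma rank_lt_of_leadingLast_lt {w w' : List (Fin (m + 1))} (h₁ : weight w' = weight w)
    (h₂ : w'.length = w.length) (h₃ : leadingLast w' < leadingLast w) : rank w' < rank w :=
  Prod.Lex.toLex_lt_toLex.2 (Or.inr ⟨h₁, Prod.Lex.toLex_lt_toLex.2 (Or.inr ⟨h₂, h₃⟩)⟩)

variable {g : List (Fin (m + 1)) → R}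

theorem mem_range_of_exists_ne_last (hg : Krel m g) (w : List (Fin (m + 1)))
    (hw : ∃ x ∈ w, x ≠ Fin.last m) : g w ∈ φ.range := by
  obtain ⟨-, hK0, hK1a, hK1b, hK2, hK3⟩ := hg
  have hm : 1 ≤ m := by
    obtain ⟨x, -, hx⟩ := hw
    have := Fin.val_lt_last hx
    omega
  have pred_ne_last : (⟨m - 1, by omega⟩ : Fin (m + 1)) ≠ Fin.last m := by
    simp [Fin.ext_iff]; omega
  have append_pred (u : List (Fin (m + 1))) :
      ∃ x ∈ u ++ [⟨m - 1, by omega⟩], x ≠ Fin.last m :=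
    ⟨_, List.mem_concat_self, pred_ne_last⟩
  have mem_range (p : P) : φ p ∈ φ.range := φ.mem_range_self p
  induction w using (InvImage.wf rank wellFounded_lt).induction with
  | _ w ih =>
  obtain _ | ⟨x, v⟩ := w
  · simp at hw
  obtain rfl | hx0 := eq_or_ne x 0
  · obtain _ | ⟨y, u⟩ := v
    · rw [hK0]
      exact add_mem (one_mem _) (mem_range a)
    obtain rfl | hy := eq_or_ne y (Fin.last m)
    · rw [hK1a u]
      refine mul_mem (pow_mem (mem_range t) _) (ih _ (rank_lt_of_weight_lt ?_) (append_pred u))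
      simp; omega
    · rw [hK1b y u (Fin.val_lt_last hy)]
      exact mul_mem (add_mem (pow_mem (mem_range t) _) (mem_range a))
        (ih _ (rank_lt_of_length_lt (by simp) (by simp)) ⟨y, List.mem_cons_self, hy⟩)
  obtain rfl | hxm := eq_or_ne x (Fin.last m)
  · have hv : ∃ x ∈ v, x ≠ Fin.last m := by simpa using hw
    rw [hK3 v]
    refine add_mem (ih _ (rank_lt_of_weight_lt ?_) (append_pred v)) (mul_mem (mem_range q)
      (ih _ (rank_lt_of_leadingLast_lt (by simp [add_comm]) (by simp) ?_) ?_))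
    · simp; omega
    · rw [leadingLast_append _ hv, leadingLast_cons_last]; omega
    · exact hv.imp fun _ ⟨h, h'⟩ => ⟨List.mem_append_left _ h, h'⟩
  have hx1 : 1 ≤ (x : ℕ) := Nat.one_le_iff_ne_zero.2 (Fin.val_ne_zero_iff.2 hx0)
  have hxm' : (x : ℕ) < m := Fin.val_lt_last hxm
  rw [← Fin.eta x (by omega), hK2 v x hx1 (by omega)]
  refine mul_mem (pow_mem (mem_range t) _) (ih _ (rank_lt_of_weight_lt ?_) ?_)
  · simp; omega
  · exact ⟨_, List.mem_concat_self, by simp [Fin.ext_iff]; omega⟩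

end Krel

theorem stmt6_general (m : ℕ) (g : List (Fin (m + 1)) → R) (hg : Krel m g)
    (v : List (Fin (m + 1))) (hv : v ≠ List.replicate v.length (Fin.last m)) :
    g v ∈ Set.range φ := by
  rw [← RingHom.coe_range]
  refine hg.mem_range_of_exists_ne_last v ?_
  by_contra! h
  exact hv (List.eq_replicate_iff.mpr ⟨rfl, h⟩)

/-- For the unique `R`-valued function `g` satisfying (K0)–(K3): if `v` is not
of the form `(m,m,…,m)`, then `g(v)` lies in the image of `ℤ[q,t,a]` under the
localization map, i.e. `g(v)` is a polynomial in `q,t,a` with no denominator. -/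
theorem stmt6 (m : ℕ) (hm : 1 ≤ m) (g : List (Fin (m + 1)) → R) (hg : Krel m g)
    (v : List (Fin (m + 1))) (hv : v ≠ List.replicate v.length (Fin.last m)) :
    g v ∈ Set.range φ :=
  stmt6_general m g hg v hv
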